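/- Let λ ∈ ℝ with λ ≠ 0, T > 0, B > 0. Let w : [0,T] → ℝ be continuous with w(t) > 0 for all t and ∫₀ᵀ w(t)^{−2} dt ≤ B, and let U, u : [0,T] → ℝ be differentiable with U'(t) = λ·U(t) + w(t), u'(t) = λ·u(t) for all t ∈ [0,T], and U(0) = u(0). Then |U(T) − u(T)| ≥ B^{−1/2}·( 3(e^{2λT/3} − 1)/(2λ) )^{3/2}. -/

import Mathlib

/-! The error `e = U - u` solves `e' = λ e + w`, `e 0 = 0`, so by variation of constants
`e T = ∫₀ᵀ e^{λ(T-t)} w t dt > 0`. Since `e^{2λ(T-t)/3} = (e^{λ(T-t)} w)^{2/3} (w⁻²)^{1/3}`,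
Hölder's inequality with exponents `3/2` and `3` gives
`(∫₀ᵀ e^{2λ(T-t)/3} dt)³ ≤ (e T)² ∫₀ᵀ w⁻² ≤ B (e T)²`, and the left integral equals
`3 (e^{2λT/3} - 1) / (2λ)`. -/

open MeasureTheory Set Real

theorem three_mul_le_two_mul_add_of_pow_three_le {a b h : ℝ} (ha : 0 ≤ a) (hb : 0 ≤ b)
    (hab : h ^ 3 ≤ a ^ 2 * b) : 3 * h ≤ 2 * a + b := by
  refine le_of_pow_le_pow_left₀ three_ne_zero (by positivity) ?_
  nlinarith [mul_nonneg (sq_nonneg (a - b)) (by positivity : 0 ≤ 8 * a + b)]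

theorem integral_pow_three_le_sq_mul {α : Type*} [MeasurableSpace α] {μ : Measure α}
    {f g h : α → ℝ} (hf : Integrable f μ) (hg : Integrable g μ) (hh : Integrable h μ)
    (hf0 : 0 ≤ᵐ[μ] f) (hg0 : 0 ≤ᵐ[μ] g) (hfgh : ∀ᵐ x ∂μ, h x ^ 3 ≤ f x ^ 2 * g x) :
    (∫ x, h x ∂μ) ^ 3 ≤ (∫ x, f x ∂μ) ^ 2 * ∫ x, g x ∂μ := by
  set F := ∫ x, f x ∂μ
  set G := ∫ x, g x ∂μ
  set H := ∫ x, h x ∂μ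
  have hG : 0 ≤ G := integral_nonneg_of_ae hg0
  rcases le_or_gt H 0 with hH | hH
  · have : H ^ 3 ≤ 0 := by nlinarith [sq_nonneg H]
    exact this.trans (by positivity)
  rcases (integral_nonneg_of_ae hf0).eq_or_lt with hF | hF
  · have hf_zero : f =ᵐ[μ] 0 := (integral_eq_zero_iff_of_nonneg_ae hf0 hf).1 hF.symm
    have : H ≤ 0 := integral_nonpos_of_ae <| by
      filter_upwards [hf_zero, hfgh] with x hfx hx
      rw [hfx, Pi.zero_apply, zero_pow two_ne_zero, zero_mul] at hx
      exact le_of_pow_le_pow_left₀ three_ne_zero le_rfl (by simpa using hx)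
    exact absurd hH this.not_gt
  -- AM-GM with the terms `θ f`, `θ f`, `g / θ²`; the choice `θ = H / F` makes it tight
  set θ := H / F
  have hθ : 0 < θ := div_pos hH hF
  have hpt : ∀ᵐ x ∂μ, 3 * h x ≤ 2 * θ * f x + (θ ^ 2)⁻¹ * g x := by
    filter_upwards [hf0, hg0, hfgh] with x (hfx : 0 ≤ f x) (hgx : 0 ≤ g x) hx
    rw [mul_assoc]
    refine three_mul_le_two_mul_add_of_pow_three_le (by positivity) (by positivity) ?_
    calc h x ^ 3 ≤ f x ^ 2 * g x := hx
      _ = (θ * f x) ^ 2 * ((θ ^ 2)⁻¹ * g x) := by field_simp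
  have hint : 3 * H ≤ 2 * θ * F + (θ ^ 2)⁻¹ * G := by
    calc 3 * H = ∫ x, 3 * h x ∂μ := (integral_const_mul _ _).symm
      _ ≤ ∫ x, 2 * θ * f x + (θ ^ 2)⁻¹ * g x ∂μ :=
          integral_mono_ae (hh.const_mul 3) ((hf.const_mul _).add (hg.const_mul _)) hpt
      _ = 2 * θ * F + (θ ^ 2)⁻¹ * G := by
          rw [integral_add (hf.const_mul _) (hg.const_mul _), integral_const_mul,
            integral_const_mul]
  have hθF : θ * F = H := div_mul_cancel₀ H hF.ne'
  have hθH : θ ^ 2 * H ≤ G := (le_inv_mul_iff₀ (by positivity)).1 (by linarith)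
  calc H ^ 3 = F ^ 2 * (θ ^ 2 * H) := by rw [← hθF]; ring
    _ ≤ F ^ 2 * G := by gcongr

theorem eq_exp_mul_add_integral_of_hasDerivAt {lam a b : ℝ} {e w : ℝ → ℝ}
    (he : ∀ t ∈ uIcc a b, HasDerivAt e (lam * e t + w t) t)
    (hw : IntervalIntegrable w volume a b) :
    e b = exp (lam * (b - a)) * e a + ∫ t in a..b, exp (lam * (b - t)) * w t := by
  have hderiv : ∀ t ∈ uIcc a b,
      HasDerivAt (fun s ↦ exp (-lam * s) * e s) (exp (-lam * t) * w t) t := by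
    intro t ht
    refine (((hasDerivAt_id t).const_mul (-lam)).exp.mul (he t ht)).congr_deriv ?_
    simp only [id, mul_one]
    ring
  have hFTC := intervalIntegral.integral_eq_sub_of_hasDerivAt hderiv
    (hw.continuousOn_mul (by fun_prop))
  have hexp : ∀ s, exp (lam * (b - s)) = exp (lam * b) * exp (-lam * s) := fun s ↦ by
    rw [← exp_add]; ring_nf
  simp_rw [hexp, mul_assoc, intervalIntegral.integral_const_mul, hFTC, mul_sub, ← mul_assoc,
    ← exp_add]
  simp

theorem integral_exp_mul_sub {c : ℝ} (hc : c ≠ 0) (T : ℝ) :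
    ∫ t in (0 : ℝ)..T, exp (c * (T - t)) = (exp (c * T) - 1) / c := by
  simp_rw [mul_sub]
  rw [intervalIntegral.integral_comp_sub_mul (fun x ↦ exp x) hc, integral_exp]
  simp [div_eq_inv_mul]

theorem integral_exp_pow_three_le_sq_mul {lam a b : ℝ} {w : ℝ → ℝ} (hab : a ≤ b)
    (hw : ContinuousOn w (uIcc a b)) (hwpos : ∀ t ∈ uIcc a b, 0 < w t) :
    (∫ t in a..b, exp (2 * lam / 3 * (b - t))) ^ 3 ≤
      (∫ t in a..b, exp (lam * (b - t)) * w t) ^ 2 * ∫ t in a..b, (w t ^ 2)⁻¹ := by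
  have hw_sq : IntervalIntegrable (fun t ↦ (w t ^ 2)⁻¹) volume a b :=
    ((hw.pow 2).inv₀ fun t ht ↦ (pow_pos (hwpos t ht) 2).ne').intervalIntegrable
  have hIoc : ∀ t ∈ Ioc a b, t ∈ uIcc a b := fun t ht ↦ Icc_subset_uIcc (Ioc_subset_Icc_self ht)
  simp only [intervalIntegral.integral_of_le hab]
  refine integral_pow_three_le_sq_mul (hw.intervalIntegrable.continuousOn_mul (by fun_prop)).1
    hw_sq.1 (by fun_prop : Continuous _).integrableOn_Ioc ?_ ?_ ?_
  all_goals refine ae_restrict_of_forall_mem measurableSet_Ioc fun t ht ↦ ?_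
  · exact (mul_pos (exp_pos _) (hwpos t (hIoc t ht))).le
  · exact (inv_pos.2 (pow_pos (hwpos t (hIoc t ht)) 2)).le
  · have := (hwpos t (hIoc t ht)).ne'
    refine le_of_eq ?_
    rw [mul_pow, mul_assoc, mul_inv_cancel₀ (by positivity), mul_one, ← exp_nat_mul,
      ← exp_nat_mul]
    congr 1
    push_cast
    ring

theorem rpow_neg_half_mul_rpow_three_halves_le {A B I : ℝ} (hA : 0 ≤ A) (hB : 0 < B) (hI : 0 ≤ I)
    (h : A ^ 3 ≤ B * I ^ 2) : B ^ (-(1 : ℝ) / 2) * A ^ ((3 : ℝ) / 2) ≤ I := by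
  refine le_of_pow_le_pow_left₀ two_ne_zero hI ?_
  have hsq : ∀ x : ℝ, 0 ≤ x → ∀ r : ℝ, (x ^ r) ^ 2 = x ^ (2 * r) := fun x hx r ↦ by
    rw [← rpow_natCast, ← rpow_mul hx, Nat.cast_ofNat, mul_comm]
  rw [mul_pow, hsq B hB.le, hsq A hA, show (2 : ℝ) * (-1 / 2) = -1 by norm_num,
    show (2 : ℝ) * (3 / 2) = (3 : ℕ) by norm_num, rpow_neg_one, rpow_natCast,
    inv_mul_le_iff₀ hB]
  exact h

/-- (Proposition 1 of the paper, worst case `w > 0`.) If `U' = λU + w`,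
`u' = λu` on `[0,T]`, `U 0 = u 0`, with continuous positive residual `w` satisfying the
budget `∫₀ᵀ (w t)⁻² dt ≤ B`, then `|U T − u T| ≥ B^{−1/2} (3(e^{2λT/3} − 1)/(2λ))^{3/2}`. -/
theorem stmt_3 (lam T B : ℝ) (hlam : lam ≠ 0) (hT : 0 < T) (hB : 0 < B)
    (w U u : ℝ → ℝ) (hw : ContinuousOn w (Icc 0 T))
    (hwpos : ∀ t ∈ Icc (0:ℝ) T, 0 < w t)
    (hbudget : (∫ t in (0:ℝ)..T, (w t ^ 2)⁻¹) ≤ B)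
    (hU : ∀ t ∈ Icc (0:ℝ) T, HasDerivAt U (lam * U t + w t) t)
    (hu : ∀ t ∈ Icc (0:ℝ) T, HasDerivAt u (lam * u t) t)
    (h0 : U 0 = u 0) :
    B ^ (-(1:ℝ)/2) * (3 * (Real.exp (2 * lam * T / 3) - 1) / (2 * lam)) ^ ((3:ℝ)/2) ≤
      |U T - u T| := by
  rw [← uIcc_of_le hT.le] at hw hwpos hU hu
  set I := ∫ t in (0 : ℝ)..T, exp (lam * (T - t)) * w t
  set A := ∫ t in (0 : ℝ)..T, exp (2 * lam / 3 * (T - t))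
  have hUu : U T - u T = I := by
    have hderiv : ∀ t ∈ uIcc 0 T, HasDerivAt (U - u) (lam * (U - u) t + w t) t :=
      fun t ht ↦ ((hU t ht).sub (hu t ht)).congr_deriv (by simp only [Pi.sub_apply]; ring)
    simpa [h0] using eq_exp_mul_add_integral_of_hasDerivAt hderiv hw.intervalIntegrable
  have hI : 0 < I := intervalIntegral.intervalIntegral_pos_of_pos_on
    (hw.intervalIntegrable.continuousOn_mul (by fun_prop))
    (fun t ht ↦ mul_pos (exp_pos _) (hwpos t (Ioo_subset_Icc_self.trans Icc_subset_uIcc ht))) hT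
  have hA : A = 3 * (exp (2 * lam * T / 3) - 1) / (2 * lam) :=
    (integral_exp_mul_sub (by positivity) T).trans (by field_simp)
  have hAI : A ^ 3 ≤ I ^ 2 * ∫ t in (0 : ℝ)..T, (w t ^ 2)⁻¹ :=
    integral_exp_pow_three_le_sq_mul hT.le hw hwpos
  rw [← hA, hUu, abs_of_pos hI]
  refine rpow_neg_half_mul_rpow_three_halves_le
    (intervalIntegral.integral_nonneg hT.le fun t _ ↦ (exp_pos _).le) hB hI.le ?_
  calc A ^ 3 ≤ I ^ 2 * ∫ t in (0 : ℝ)..T, (w t ^ 2)⁻¹ := hAI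
    _ ≤ B * I ^ 2 := by rw [mul_comm]; gcongr
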